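/- Let j ≥ 1, m > 1, γ₂^{(j)}(t) = exp((1/2)((2 ln t)^{1/m} + j)^m) for t ≥ e^{2^{m-1}}. Then γ₂^{(j)} is convex on [e^{2^{m-1}}, ∞) and satisfies 0 ≤ γ₂^{(j)}(t)·(γ₂^{(j)})''(t) / ((γ₂^{(j)})'(t))² ≤ 1 for all t ≥ e^{2^{m-1}}. -/

import Mathlib

/-- γ₂^{(j)}(t) = exp((1/2)((2 ln t)^{1/m} + j)^m). -/
noncomputable def gammaTwo (m : ℝ) (j : ℕ) (t : ℝ) : ℝ :=
  Real.exp ((1 / 2) * ((2 * Real.log t) ^ (1 / m) + (j : ℝ)) ^ m)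

/-!
Write γ₂^{(j)}(t) = exp ψ(ln t) with ψ(u) = ½((2u)^{1/m} + j)^m. Then ψ' = Ω := (1 + x)^{m-1}
with x = j / (2u)^{1/m}, and Ω' = -((m-1)/(mu)) x (1+x)^{m-2}, so that t² γ''/γ = Ω² - Ω + Ω'
and γ γ''/γ'² = (Ω² - Ω + Ω')/Ω². The ratio is at most 1 because Ω' ≤ 0. It is nonnegative
because Bernoulli's inequality (1+x)^m ≥ 1 + mx gives (Ω - 1)(1 + x) ≥ (m-1)x, hence
Ω(Ω - 1) ≥ (m-1) x (1+x)^{m-2} ≥ -Ω' as soon as m ln t ≥ 1, which holds once ln t ≥ 2^{m-1}.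
-/

open Real Filter Topology

theorem mul_le_one_add_rpow_sub_one_mul {x p : ℝ} (hx : 0 ≤ x) (hp : 0 ≤ p) :
    p * x ≤ ((1 + x) ^ p - 1) * (1 + x) := by
  have hbern :=
    one_add_mul_self_le_rpow_one_add (by linarith : -1 ≤ x) (by linarith : 1 ≤ p + 1)
  rw [rpow_add (by linarith), rpow_one] at hbern
  nlinarith

section ExpCompLog

variable {ψ ψ' ψ'' : ℝ → ℝ} {t : ℝ}

theorem hasDerivAt_exp_comp_log (hψ : HasDerivAt ψ (ψ' (log t)) (log t)) (ht : 0 < t) :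
    HasDerivAt (fun s ↦ exp (ψ (log s))) (exp (ψ (log t)) * ψ' (log t) / t) t := by
  refine (hψ.comp t (hasDerivAt_log ht.ne')).exp.congr_deriv ?_
  simp only [Function.comp_apply]
  field_simp

theorem hasDerivAt_exp_comp_log_mul_div (hψ : HasDerivAt ψ (ψ' (log t)) (log t))
    (hψ' : HasDerivAt ψ' (ψ'' (log t)) (log t)) (ht : 0 < t) :
    HasDerivAt (fun s ↦ exp (ψ (log s)) * ψ' (log s) / s)
      (exp (ψ (log t)) * (ψ' (log t) ^ 2 - ψ' (log t) + ψ'' (log t)) / t ^ 2) t := by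
  refine (((hasDerivAt_exp_comp_log hψ ht).mul
    (hψ'.comp t (hasDerivAt_log ht.ne'))).div (hasDerivAt_id t) ht.ne').congr_deriv ?_
  simp only [Pi.mul_apply, Function.comp_apply, id]
  field_simp
  ring

theorem iteratedDeriv_two_exp_comp_log (hψ : ∀ᶠ u in 𝓝 (log t), HasDerivAt ψ (ψ' u) u)
    (hψ' : HasDerivAt ψ' (ψ'' (log t)) (log t)) (ht : 0 < t) :
    iteratedDeriv 2 (fun s ↦ exp (ψ (log s))) t =
      exp (ψ (log t)) * (ψ' (log t) ^ 2 - ψ' (log t) + ψ'' (log t)) / t ^ 2 := by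
  have hderiv : deriv (fun s ↦ exp (ψ (log s))) =ᶠ[𝓝 t]
      fun s ↦ exp (ψ (log s)) * ψ' (log s) / s := by
    filter_upwards [(continuousAt_log ht.ne').eventually hψ, lt_mem_nhds ht] with s hs hs0
    exact (hasDerivAt_exp_comp_log hs hs0).deriv
  rw [iteratedDeriv_succ, iteratedDeriv_one, hderiv.deriv_eq]
  exact (hasDerivAt_exp_comp_log_mul_div hψ.self_of_nhds hψ' ht).deriv

end ExpCompLog

namespace GammaTwo

variable (m : ℝ) (j : ℕ) {u : ℝ}

noncomputable def exponent (u : ℝ) : ℝ := 1 / 2 * ((2 * u) ^ (1 / m) + j) ^ m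

/-- The paper's Ω_j*(t), at u = ln t. -/
noncomputable def omega (u : ℝ) : ℝ := (1 + j / (2 * u) ^ (1 / m)) ^ (m - 1)

noncomputable def omegaDeriv (u : ℝ) : ℝ :=
  -((m - 1) / (m * u)) * (j / (2 * u) ^ (1 / m)) * (1 + j / (2 * u) ^ (1 / m)) ^ (m - 2)

variable {m j}

theorem hasDerivAt_two_mul_rpow_one_div (hm : 0 < m) (hu : 0 < u) :
    HasDerivAt (fun v ↦ (2 * v) ^ (1 / m)) ((2 * u) ^ (1 / m) / (m * u)) u := by
  refine (((hasDerivAt_id u).const_mul 2).rpow_const (p := 1 / m)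
    (Or.inl (by positivity))).congr_deriv ?_
  rw [id, rpow_sub_one (by positivity)]
  field_simp

theorem two_mul_rpow_one_div_rpow (hm : 0 < m) (hu : 0 ≤ u) :
    ((2 * u) ^ (1 / m)) ^ m = 2 * u := by
  rw [one_div, rpow_inv_rpow (by positivity) hm.ne']

theorem hasDerivAt_exponent (hm : 0 < m) (hu : 0 < u) :
    HasDerivAt (exponent m j) (omega m j u) u := by
  set a := (2 * u) ^ (1 / m) with ha
  have ha0 : 0 < a := by positivity
  refine ((((hasDerivAt_two_mul_rpow_one_div hm hu).add_const (j : ℝ)).rpow_const (p := m)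
    (Or.inl (by positivity))).const_mul (1 / 2)).congr_deriv ?_
  have hsplit : 1 + j / a = (a + j) / a := by field_simp
  rw [omega, ← ha, hsplit, div_rpow (by positivity) ha0.le, rpow_sub_one ha0.ne',
    rpow_sub_one (by positivity), ha, two_mul_rpow_one_div_rpow hm hu.le]
  field_simp

theorem hasDerivAt_omega (hm : 0 < m) (hu : 0 < u) :
    HasDerivAt (omega m j) (omegaDeriv m j u) u := by
  have ha0 : 0 < (2 * u) ^ (1 / m) := by positivity
  have hbase : HasDerivAt (fun v ↦ 1 + (j : ℝ) / (2 * v) ^ (1 / m))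
      (-((j : ℝ) / (2 * u) ^ (1 / m)) / (m * u)) u := by
    refine (((hasDerivAt_const u (j : ℝ)).div (hasDerivAt_two_mul_rpow_one_div hm hu)
      ha0.ne').const_add 1).congr_deriv ?_
    field_simp
    ring
  refine (hbase.rpow_const (p := m - 1) (Or.inl (by positivity))).congr_deriv ?_
  rw [omegaDeriv, show m - 1 - 1 = m - 2 by ring]
  field_simp

theorem one_le_omega (hm : 1 ≤ m) (hu : 0 ≤ u) : 1 ≤ omega m j u := by
  have : 0 ≤ (2 * u) ^ (1 / m) := by positivity
  exact one_le_rpow (le_add_of_nonneg_right (by positivity)) (by linarith)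

theorem omegaDeriv_nonpos (hm : 1 ≤ m) (hu : 0 ≤ u) : omegaDeriv m j u ≤ 0 := by
  have hm1 : 0 ≤ m - 1 := by linarith
  have : 0 ≤ (2 * u) ^ (1 / m) := by positivity
  rw [omegaDeriv, neg_mul, neg_mul, neg_nonpos]
  positivity

theorem omega_sq_sub_omega_add_omegaDeriv_nonneg (hm : 1 ≤ m) (hmu : 1 ≤ m * u) :
    0 ≤ omega m j u ^ 2 - omega m j u + omegaDeriv m j u := by
  have hu : 0 < u := pos_of_mul_pos_right (by linarith) (by linarith : (0 : ℝ) ≤ m)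
  set x := (j : ℝ) / (2 * u) ^ (1 / m)
  have hx : 0 ≤ x := by positivity
  set Ω := omega m j u
  have hpow : (1 + x) ^ (m - 2) = Ω / (1 + x) := by
    rw [show m - 2 = m - 1 - 1 by ring, rpow_sub_one (by positivity)]
    rfl
  have hbern : (m - 1) * x ≤ (Ω - 1) * (1 + x) :=
    mul_le_one_add_rpow_sub_one_mul hx (by linarith)
  have hcoef : (m - 1) / (m * u) * x ≤ (m - 1) * x :=
    mul_le_mul_of_nonneg_right (div_le_self (by linarith) hmu) hx
  have : (m - 1) / (m * u) * x * (Ω / (1 + x)) ≤ Ω ^ 2 - Ω := calc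
    _ ≤ (Ω - 1) * (1 + x) * (Ω / (1 + x)) :=
      mul_le_mul_of_nonneg_right (hcoef.trans hbern)
        (div_nonneg (by linarith [one_le_omega (j := j) hm hu.le]) (by positivity))
    _ = Ω ^ 2 - Ω := by field_simp
  rw [omegaDeriv, hpow]
  linarith

end GammaTwo

open GammaTwo

section

variable {m : ℝ} {j : ℕ} {t : ℝ}

theorem gammaTwo_eq_exp_comp_log (m : ℝ) (j : ℕ) :
    gammaTwo m j = fun t ↦ exp (exponent m j (log t)) := rfl

theorem hasDerivAt_gammaTwo (hm : 0 < m) (ht : 1 < t) :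
    HasDerivAt (gammaTwo m j) (gammaTwo m j t * omega m j (log t) / t) t :=
  hasDerivAt_exp_comp_log (hasDerivAt_exponent hm (log_pos ht)) (by linarith)

theorem hasDerivAt_gammaTwo_mul_omega_div (hm : 0 < m) (ht : 1 < t) :
    HasDerivAt (fun s ↦ gammaTwo m j s * omega m j (log s) / s)
      (gammaTwo m j t *
        (omega m j (log t) ^ 2 - omega m j (log t) + omegaDeriv m j (log t)) / t ^ 2) t :=
  hasDerivAt_exp_comp_log_mul_div (hasDerivAt_exponent hm (log_pos ht))
    (hasDerivAt_omega hm (log_pos ht)) (by linarith)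

theorem gammaTwo_mul_iteratedDeriv_two_div_sq (hm : 0 < m) (ht : 1 < t) :
    gammaTwo m j t * iteratedDeriv 2 (gammaTwo m j) t / deriv (gammaTwo m j) t ^ 2 =
      (omega m j (log t) ^ 2 - omega m j (log t) + omegaDeriv m j (log t)) /
        omega m j (log t) ^ 2 := by
  have hexp : ∀ᶠ u in 𝓝 (log t), HasDerivAt (exponent m j) (omega m j u) u := by
    filter_upwards [lt_mem_nhds (log_pos ht)] with u hu using hasDerivAt_exponent hm hu
  rw [(hasDerivAt_gammaTwo hm ht).deriv, gammaTwo_eq_exp_comp_log,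
    iteratedDeriv_two_exp_comp_log hexp (hasDerivAt_omega hm (log_pos ht)) (by linarith)]
  have : 0 < exp (exponent m j (log t)) := exp_pos _
  have : 0 < t := by linarith
  field_simp

end

theorem gammaTwo_convex_general (m : ℝ) (hm : 1 < m) (j : ℕ) :
    ConvexOn ℝ (Set.Ici (Real.exp ((2 : ℝ) ^ (m - 1)))) (gammaTwo m j) ∧
      ∀ t : ℝ, Real.exp ((2 : ℝ) ^ (m - 1)) ≤ t →
        0 ≤ gammaTwo m j t * iteratedDeriv 2 (gammaTwo m j) t / (deriv (gammaTwo m j) t) ^ 2 ∧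
        gammaTwo m j t * iteratedDeriv 2 (gammaTwo m j) t / (deriv (gammaTwo m j) t) ^ 2 ≤ 1 := by
  have hm0 : 0 < m := by linarith
  have hthreshold : ∀ t, exp (2 ^ (m - 1)) ≤ t → 1 < t ∧ 1 ≤ m * log t := by
    intro t ht
    have het : exp 1 ≤ t := (exp_le_exp.2 (one_le_rpow one_le_two (by linarith))).trans ht
    have hlog : 1 ≤ log t := (le_log_iff_exp_le ((exp_pos 1).trans_le het)).2 het
    exact ⟨(one_lt_exp_iff.2 one_pos).trans_le het, by nlinarith⟩
  have hkey : ∀ t, exp (2 ^ (m - 1)) ≤ t →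
      0 ≤ omega m j (log t) ^ 2 - omega m j (log t) + omegaDeriv m j (log t) :=
    fun t ht ↦ omega_sq_sub_omega_add_omegaDeriv_nonneg hm.le (hthreshold t ht).2
  refine ⟨?_, fun t ht ↦ ?_⟩
  · refine convexOn_of_hasDerivWithinAt2_nonneg (convex_Ici _)
      (f' := fun s ↦ gammaTwo m j s * omega m j (log s) / s)
      (f'' := fun s ↦ gammaTwo m j s *
        (omega m j (log s) ^ 2 - omega m j (log s) + omegaDeriv m j (log s)) / s ^ 2)
      (fun t ht ↦ (hasDerivAt_gammaTwo hm0 (hthreshold t ht).1).continuousAt.continuousWithinAt)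
      (fun t ht ↦ ?_) (fun t ht ↦ ?_) (fun t ht ↦ ?_) <;> rw [interior_Ici] at ht
    · exact (hasDerivAt_gammaTwo hm0 (hthreshold t ht.le).1).hasDerivWithinAt
    · exact (hasDerivAt_gammaTwo_mul_omega_div hm0 (hthreshold t ht.le).1).hasDerivWithinAt
    · have := hkey t ht.le
      have : 0 < gammaTwo m j t := exp_pos _
      positivity
  · have ht1 := (hthreshold t ht).1
    have hΩ := one_le_omega (j := j) hm.le (log_pos ht1).le
    have hΩ' := omegaDeriv_nonpos (j := j) hm.le (log_pos ht1).le
    rw [gammaTwo_mul_iteratedDeriv_two_div_sq hm0 ht1, div_le_one (pow_pos (by linarith) 2)]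
    exact ⟨div_nonneg (hkey t ht) (sq_nonneg _), by linarith⟩

/-- For j ≥ 1 and m > 1, γ₂^{(j)} is convex on [e^{2^{m-1}}, ∞) and satisfies
0 ≤ γ₂^{(j)} (γ₂^{(j)})'' / ((γ₂^{(j)})')² ≤ 1 there. -/
theorem gammaTwo_convex (m : ℝ) (hm : 1 < m) (j : ℕ) (hj : 1 ≤ j) :
    ConvexOn ℝ (Set.Ici (Real.exp ((2 : ℝ) ^ (m - 1)))) (gammaTwo m j) ∧
      ∀ t : ℝ, Real.exp ((2 : ℝ) ^ (m - 1)) ≤ t →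
        0 ≤ gammaTwo m j t * iteratedDeriv 2 (gammaTwo m j) t / (deriv (gammaTwo m j) t) ^ 2 ∧
        gammaTwo m j t * iteratedDeriv 2 (gammaTwo m j) t / (deriv (gammaTwo m j) t) ^ 2 ≤ 1 :=
  gammaTwo_convex_general m hm j
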